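/- arXiv:1206.6312 — 3 statements merged into one kernel-verified Lean document; each statement's English description precedes it below -/
import Mathlib

section
/- One-step error bound for the cutoff scheme (inequality (thm2.1-6)). Let m be a positive integer, let B₀, B₁ be m×m real matrices with B₁ invertible, and let K, K₁, Δt > 0 satisfy ‖B₁⁻¹‖ ≤ K₁ and ‖B₁⁻¹ B₀‖ ≤ 1 + K Δt, where ‖·‖ is the operator norm on matrices induced by the supremum norm on ℝ^m. Let U, U', u, u', F ∈ ℝ^m with u componentwise nonnegative, suppose B₁ U' = B₀ U⁺ + F (the cutoff scheme step, where U⁺ is the componentwise nonnegative cutoff of U), and set τ = B₁ u' − B₀ u − F. Then ‖U' − u'‖∞ ≤ (1 + K Δt) ‖U − u‖∞ + K₁ ‖τ‖∞. -/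
/-!
The error `U' - u'` satisfies `B₁ (U' - u') = B₀ (U⁺ - u) - τ`, so inverting `B₁` bounds it by
`‖B₁⁻¹ B₀‖ ‖U⁺ - u‖ + ‖B₁⁻¹‖ ‖τ‖`. Since `u ≥ 0` we have `u = u⁺`, and the cutoff is
`1`-Lipschitz in every coordinate, so `‖U⁺ - u‖ ≤ ‖U - u‖`.
-/

open Matrix

attribute [local instance] Matrix.linftyOpNormedAddCommGroup Matrix.linftyOpNormedRing

theorem Pi.norm_posPart_sub_posPart_le {ι : Type*} [Fintype ι] (U u : ι → ℝ) :
    ‖U⁺ - u⁺‖ ≤ ‖U - u‖ :=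
  (pi_norm_le_iff_of_nonneg (norm_nonneg _)).mpr fun i =>
    (norm_sup_sub_sup_le_norm (U i) (u i) 0).trans (norm_le_pi_norm (U - u) i)

section LinearStep

variable {ι 𝕜 : Type*} [Fintype ι] [DecidableEq ι] [NormedField 𝕜]
  {B₀ B₁ : Matrix ι ι 𝕜} {V V' F : ι → 𝕜}

theorem sub_eq_inv_mul_mulVec_sub_sub_inv_mulVec (hB₁ : IsUnit B₁)
    (hstep : B₁ *ᵥ V' = B₀ *ᵥ V + F) (v v' : ι → 𝕜) :
    V' - v' = (B₁⁻¹ * B₀) *ᵥ (V - v) - B₁⁻¹ *ᵥ (B₁ *ᵥ v' - B₀ *ᵥ v - F) := by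
  have herror : B₁ *ᵥ (V' - v') = B₀ *ᵥ (V - v) - (B₁ *ᵥ v' - B₀ *ᵥ v - F) := by
    rw [mulVec_sub, mulVec_sub, hstep]
    abel
  rw [← mulVec_mulVec, ← mulVec_sub, ← herror, mulVec_mulVec,
    nonsing_inv_mul _ ((isUnit_iff_isUnit_det B₁).mp hB₁), one_mulVec]

theorem norm_sub_le_of_mulVec_eq_add (hB₁ : IsUnit B₁)
    (hstep : B₁ *ᵥ V' = B₀ *ᵥ V + F) (v v' : ι → 𝕜) :
    ‖V' - v'‖ ≤ ‖B₁⁻¹ * B₀‖ * ‖V - v‖ + ‖B₁⁻¹‖ * ‖B₁ *ᵥ v' - B₀ *ᵥ v - F‖ := by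
  rw [sub_eq_inv_mul_mulVec_sub_sub_inv_mulVec hB₁ hstep v v']
  exact (norm_sub_le _ _).trans (add_le_add (linfty_opNorm_mulVec _ _) (linfty_opNorm_mulVec _ _))

end LinearStep

theorem cutoff_one_step_error_general (m : ℕ)
    (B₀ B₁ : Matrix (Fin m) (Fin m) ℝ) (hB₁ : IsUnit B₁)
    (K K₁ Δt : ℝ)
    (hinv : ‖B₁⁻¹‖ ≤ K₁) (hstab : ‖B₁⁻¹ * B₀‖ ≤ 1 + K * Δt)
    (U U' u u' F : Fin m → ℝ) (hu : ∀ i, 0 ≤ u i)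
    (hstep : B₁.mulVec U' = B₀.mulVec (fun i => max (U i) 0) + F)
    (τ : Fin m → ℝ) (hτ : τ = B₁.mulVec u' - B₀.mulVec u - F) :
    ‖U' - u'‖ ≤ (1 + K * Δt) * ‖U - u‖ + K₁ * ‖τ‖ := by
  have hcutoff : ‖U⁺ - u‖ ≤ ‖U - u‖ := by
    simpa only [posPart_eq_self.mpr (show 0 ≤ u from hu)] using
      Pi.norm_posPart_sub_posPart_le U u
  calc ‖U' - u'‖ ≤ ‖B₁⁻¹ * B₀‖ * ‖U⁺ - u‖ + ‖B₁⁻¹‖ * ‖τ‖ :=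
        hτ ▸ norm_sub_le_of_mulVec_eq_add hB₁ hstep u u'
    _ ≤ (1 + K * Δt) * ‖U - u‖ + K₁ * ‖τ‖ := by
        have hgrowth : 0 ≤ 1 + K * Δt := (norm_nonneg _).trans hstab
        gcongr

/-- One-step error bound for the cutoff scheme (inequality (thm2.1-6)):
if `‖B₁⁻¹‖ ≤ K₁`, `‖B₁⁻¹ B₀‖ ≤ 1 + K Δt`, `u` is componentwise nonnegative,
`B₁ U' = B₀ U⁺ + F` (where `U⁺` is the componentwise nonnegative cutoff of `U`),
and `τ = B₁ u' - B₀ u - F`, then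
`‖U' - u'‖∞ ≤ (1 + K Δt) ‖U - u‖∞ + K₁ ‖τ‖∞`. -/
theorem cutoff_one_step_error (m : ℕ) (hm : 0 < m)
    (B₀ B₁ : Matrix (Fin m) (Fin m) ℝ) (hB₁ : IsUnit B₁)
    (K K₁ Δt : ℝ) (hK : 0 < K) (hK₁ : 0 < K₁) (hΔt : 0 < Δt)
    (hinv : ‖B₁⁻¹‖ ≤ K₁) (hstab : ‖B₁⁻¹ * B₀‖ ≤ 1 + K * Δt)
    (U U' u u' F : Fin m → ℝ) (hu : ∀ i, 0 ≤ u i)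
    (hstep : B₁.mulVec U' = B₀.mulVec (fun i => max (U i) 0) + F)
    (τ : Fin m → ℝ) (hτ : τ = B₁.mulVec u' - B₀.mulVec u - F) :
    ‖U' - u'‖ ≤ (1 + K * Δt) * ‖U - u‖ + K₁ * ‖τ‖ :=
  cutoff_one_step_error_general m B₀ B₁ hB₁ K K₁ Δt hinv hstab U U' u u' F hu hstep τ hτ
end

section
/- Theorem 2.1 (convergence of the cutoff finite difference method). Let m be a positive integer, let B₀, B₁ be m×m real matrices with B₁ invertible, and let K, K₁, Δt > 0 and C, X ≥ 0 satisfy ‖B₁⁻¹‖ ≤ K₁ and ‖B₁⁻¹ B₀‖ ≤ 1 + K Δt, where ‖·‖ is the operator norm induced by the supremum norm on ℝ^m. Let u : ℕ → ℝ^m be a sequence of componentwise nonnegative vectors (the exact solution values), let F : ℕ → ℝ^m, and suppose the local truncation errors τ^n = B₁ u^{n+1} − B₀ u^n − F^n satisfy ‖τ^n‖∞ ≤ C · Δt · X for all n. Let U : ℕ → ℝ^m be the sequence generated by the cutoff scheme, i.e. U⁰ = u⁰ and B₁ U^{n+1} = B₀ (U^n)⁺ + F^n for all n, where (U^n)⁺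 is the componentwise nonnegative cutoff of U^n. Then for every n, ‖(U^n)⁺ − u^n‖∞ ≤ ‖U^n − u^n‖∞ ≤ (K₁/K) · exp(K · n · Δt) · C · X. (In the paper X = Δt^p + h^q for a (p,q)-order scheme, and tₙ = n Δt.) -/
/-!
Subtracting the scheme from the truncation-error identity gives
`Uⁿ⁺¹ - uⁿ⁺¹ = B₁⁻¹B₀ ((Uⁿ)⁺ - uⁿ) - B₁⁻¹τⁿ`. Since `uⁿ ≥ 0`, the cutoff is a contraction
towards `uⁿ`, so `eₙ = ‖Uⁿ - uⁿ‖∞` obeys `eₙ₊₁ ≤ (1 + KΔt) eₙ + K₁CΔtX` with `e₀ = 0`,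
and the discrete Gronwall inequality together with `(1 + KΔt)ⁿ ≤ exp(KnΔt)` gives the bound.
-/

open Matrix

attribute [local instance] Matrix.linftyOpNormedAddCommGroup Matrix.linftyOpNormedRing

/- Unlike Mathlib's `discrete_gronwall` (which gives `n b exp(n a)`), summing the geometric series
exactly yields the time-uniform factor `b / a`, i.e. `K₁CX/K` rather than `nΔt K₁CX`. -/
theorem discrete_gronwall_const {e : ℕ → ℝ} {a b : ℝ} (ha : 0 < a) (h0 : e 0 ≤ 0)
    (hrec : ∀ n, e (n + 1) ≤ (1 + a) * e n + b) (n : ℕ) :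
    e n ≤ b / a * ((1 + a) ^ n - 1) := by
  induction n with
  | zero => simpa using h0
  | succ n ih =>
    calc e (n + 1) ≤ (1 + a) * e n + b := hrec n
      _ ≤ (1 + a) * (b / a * ((1 + a) ^ n - 1)) + b := by gcongr
      _ = b / a * ((1 + a) ^ (n + 1) - 1) := by field_simp; ring

theorem discrete_gronwall_const_exp {e : ℕ → ℝ} {a b : ℝ} (ha : 0 < a) (hb : 0 ≤ b)
    (h0 : e 0 ≤ 0) (hrec : ∀ n, e (n + 1) ≤ (1 + a) * e n + b) (n : ℕ) :
    e n ≤ b / a * Real.exp (n * a) := by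
  have hpow : (1 + a) ^ n ≤ Real.exp (n * a) := by
    rw [Real.exp_nat_mul]
    gcongr
    linarith [Real.add_one_le_exp a]
  calc e n ≤ b / a * ((1 + a) ^ n - 1) := discrete_gronwall_const ha h0 hrec n
    _ ≤ b / a * Real.exp (n * a) := by gcongr; linarith

theorem norm_max_zero_sub_le {ι : Type*} [Fintype ι] {v w : ι → ℝ} (hw : ∀ i, 0 ≤ w i) :
    ‖(fun i => max (v i) 0) - w‖ ≤ ‖v - w‖ := by
  refine (pi_norm_le_iff_of_nonneg (norm_nonneg _)).mpr fun i => ?_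
  calc |max (v i) 0 - w i| = |max (v i) 0 - max (w i) 0| := by rw [max_eq_left (hw i)]
    _ ≤ |v i - w i| := abs_max_sub_max_le_abs _ _ _
    _ ≤ ‖v - w‖ := norm_le_pi_norm (v - w) i

section Scheme

variable {ι R : Type*} [Fintype ι] [DecidableEq ι]

theorem sub_eq_inv_mul_mulVec_sub_sub [CommRing R] {B₀ B₁ : Matrix ι ι R} (hB₁ : IsUnit B₁)
    {U' V u u' F : ι → R} (hstep : B₁ *ᵥ U' = B₀ *ᵥ V + F) :
    U' - u' = (B₁⁻¹ * B₀) *ᵥ (V - u) - B₁⁻¹ *ᵥ (B₁ *ᵥ u' - B₀ *ᵥ u - F) := by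
  have hinv : B₁⁻¹ * B₁ = 1 := nonsing_inv_mul B₁ ((isUnit_iff_isUnit_det B₁).mp hB₁)
  have h : B₁ *ᵥ (U' - u') = B₀ *ᵥ (V - u) - (B₁ *ᵥ u' - B₀ *ᵥ u - F) := by
    rw [mulVec_sub, mulVec_sub, hstep]
    abel
  have := congrArg (B₁⁻¹ *ᵥ ·) h
  simpa only [mulVec_mulVec, hinv, one_mulVec, mulVec_sub] using this

theorem norm_sub_le_of_mulVec_eq [NormedCommRing R] {B₀ B₁ : Matrix ι ι R} (hB₁ : IsUnit B₁)
    {U' V u u' F : ι → R} (hstep : B₁ *ᵥ U' = B₀ *ᵥ V + F) :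
    ‖U' - u'‖ ≤ ‖B₁⁻¹ * B₀‖ * ‖V - u‖ + ‖B₁⁻¹‖ * ‖B₁ *ᵥ u' - B₀ *ᵥ u - F‖ := by
  rw [sub_eq_inv_mul_mulVec_sub_sub hB₁ hstep]
  exact (norm_sub_le _ _).trans <|
    add_le_add (linfty_opNorm_mulVec _ _) (linfty_opNorm_mulVec _ _)

end Scheme

theorem cutoff_method_convergence_general (m : ℕ)
    (B₀ B₁ : Matrix (Fin m) (Fin m) ℝ) (hB₁ : IsUnit B₁)
    (K K₁ Δt C X : ℝ) (hK : 0 < K) (hΔt : 0 < Δt)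
    (hC : 0 ≤ C) (hX : 0 ≤ X)
    (hinv : ‖B₁⁻¹‖ ≤ K₁) (hstab : ‖B₁⁻¹ * B₀‖ ≤ 1 + K * Δt)
    (u : ℕ → Fin m → ℝ) (hu : ∀ n i, 0 ≤ u n i)
    (F : ℕ → Fin m → ℝ)
    (hτ : ∀ n, ‖B₁.mulVec (u (n + 1)) - B₀.mulVec (u n) - F n‖ ≤ C * Δt * X)
    (U : ℕ → Fin m → ℝ) (hU0 : U 0 = u 0)
    (hstep : ∀ n, B₁.mulVec (U (n + 1)) = B₀.mulVec (fun i => max (U n i) 0) + F n) :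
    ∀ n : ℕ, ‖(fun i => max (U n i) 0) - u n‖ ≤ ‖U n - u n‖ ∧
      ‖U n - u n‖ ≤ (K₁ / K) * Real.exp (K * n * Δt) * C * X := by
  have hcut n : ‖(fun i => max (U n i) 0) - u n‖ ≤ ‖U n - u n‖ :=
    norm_max_zero_sub_le (hu n)
  have hK₁ : 0 ≤ K₁ := (norm_nonneg _).trans hinv
  have hrec n : ‖U (n + 1) - u (n + 1)‖ ≤ (1 + K * Δt) * ‖U n - u n‖ + K₁ * (C * Δt * X) := by
    refine (norm_sub_le_of_mulVec_eq (u := u n) hB₁ (hstep n)).trans ?_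
    gcongr
    exacts [hcut n, hτ n]
  intro n
  refine ⟨hcut n, ?_⟩
  calc ‖U n - u n‖ ≤ K₁ * (C * Δt * X) / (K * Δt) * Real.exp (n * (K * Δt)) :=
        discrete_gronwall_const_exp (e := fun n => ‖U n - u n‖) (by positivity) (by positivity)
          (by simp [hU0]) hrec n
    _ = (K₁ / K) * Real.exp (K * n * Δt) * C * X := by field_simp

/-- Theorem 2.1 (convergence of the cutoff finite difference method):
with `‖B₁⁻¹‖ ≤ K₁`, `‖B₁⁻¹ B₀‖ ≤ 1 + K Δt`, exact solution values `u n` componentwise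
nonnegative with local truncation errors `τ n = B₁ u^{n+1} - B₀ u^n - F^n` satisfying
`‖τ n‖∞ ≤ C Δt X`, and the cutoff scheme `U⁰ = u⁰`, `B₁ U^{n+1} = B₀ (U^n)⁺ + F^n`,
we have `‖(U^n)⁺ - u^n‖∞ ≤ ‖U^n - u^n‖∞ ≤ (K₁/K) exp(K n Δt) C X` for all `n`. -/
theorem cutoff_method_convergence (m : ℕ) (hm : 0 < m)
    (B₀ B₁ : Matrix (Fin m) (Fin m) ℝ) (hB₁ : IsUnit B₁)
    (K K₁ Δt C X : ℝ) (hK : 0 < K) (hK₁ : 0 < K₁) (hΔt : 0 < Δt)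
    (hC : 0 ≤ C) (hX : 0 ≤ X)
    (hinv : ‖B₁⁻¹‖ ≤ K₁) (hstab : ‖B₁⁻¹ * B₀‖ ≤ 1 + K * Δt)
    (u : ℕ → Fin m → ℝ) (hu : ∀ n i, 0 ≤ u n i)
    (F : ℕ → Fin m → ℝ)
    (hτ : ∀ n, ‖B₁.mulVec (u (n + 1)) - B₀.mulVec (u n) - F n‖ ≤ C * Δt * X)
    (U : ℕ → Fin m → ℝ) (hU0 : U 0 = u 0)
    (hstep : ∀ n, B₁.mulVec (U (n + 1)) = B₀.mulVec (fun i => max (U n i) 0) + F n) :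
    ∀ n : ℕ, ‖(fun i => max (U n i) 0) - u n‖ ≤ ‖U n - u n‖ ∧
      ‖U n - u n‖ ≤ (K₁ / K) * Real.exp (K * n * Δt) * C * X :=
  cutoff_method_convergence_general m B₀ B₁ hB₁ K K₁ Δt C X hK hΔt hC hX hinv hstab u hu F hτ U hU0
    hstep
end

section
/- Theorem 2.2 (convergence of the δ-cutoff finite difference method). Let m be a positive integer, let B₀, B₁ be m×m real matrices with B₁ invertible, let δ ≥ 0 be a cutoff parameter, and let K, K₁, Δt > 0 and C, X ≥ 0 satisfy ‖B₁⁻¹‖ ≤ K₁ and ‖B₁⁻¹ B₀‖ ≤ 1 + K Δt, where ‖·‖ is the operator norm induced by the supremum norm on ℝ^m. Let u : ℕ → ℝ^m be a sequence of componentwise nonnegative vectors (the exact solution values), let F : ℕ → ℝ^m, and suppose the local truncation errors τ^n = B₁ u^{n+1} − B₀ u^n − F^n satisfy ‖τ^n‖∞ ≤ C · Δt · X for all n. Let U : ℕ → ℝ^m be the sequence generated by the δ-cutoff scheme, i.e. U⁰ = u⁰ and B₁ U^{n+1} = B₀ (U^n)_δ⁺ + F^n for all n, where (U^n)_δ⁺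 is the componentwise δ-cutoff of U^n. Then for every n, ‖(U^n)_δ⁺ − u^n‖∞ ≤ (K₁/K) · exp(K · n · Δt) · C · X + (((1 + K Δt)/(K Δt)) · exp(K · n · Δt) + 1) · δ. (In the paper X = Δt^p + h^q for a (p,q)-order scheme, and tₙ = n Δt.) -/
/-!
The error `eⁿ = ‖(Uⁿ)_δ⁺ - uⁿ‖` obeys `eⁿ⁺¹ ≤ (1 + KΔt) eⁿ + (K₁ C Δt X + δ)`: one step of the scheme
propagates the error through `B₁⁻¹ B₀` and adds `B₁⁻¹ τⁿ`, and since `uⁿ⁺¹ ≥ 0`, cutting off at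
`δ ≥ 0` increases the distance to `uⁿ⁺¹` by at most `δ`. The Grönwall bound
`δ e^{Kx} + ε / K (e^{Kx} - 1)` satisfies the same recursion with `≥` (as `1 + K ≤ e^K`), so it
dominates `eⁿ`, and evaluating it at `K := KΔt`, `x := n` gives the estimate.
-/

open Matrix

attribute [local instance] Matrix.linftyOpNormedAddCommGroup Matrix.linftyOpNormedRing

def cutoff {ι : Type*} (δ : ℝ) (v : ι → ℝ) : ι → ℝ := fun i => max (v i) δ

def localTruncationError {n R : Type*} [Fintype n] [Ring R] (B₀ B₁ : Matrix n n R)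
    (F u u' : n → R) : n → R :=
  B₁ *ᵥ u' - B₀ *ᵥ u - F

theorem abs_max_sub_le_abs_sub_add {α : Type*} [AddCommGroup α] [LinearOrder α]
    [IsOrderedAddMonoid α] {a b δ : α} (hδ : 0 ≤ δ) (hb : 0 ≤ b) :
    |max a δ - b| ≤ |a - b| + δ := by
  have hcut : |max b δ - b| ≤ δ := by
    rw [abs_of_nonneg (sub_nonneg.2 (le_max_left b δ)), sub_le_iff_le_add']
    exact max_le (le_add_of_nonneg_right hδ) (le_add_of_nonneg_left hb)
  calc |max a δ - b| ≤ |max a δ - max b δ| + |max b δ - b| := abs_sub_le _ _ _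
    _ ≤ |a - b| + δ := add_le_add (abs_max_sub_max_le_abs a b δ) hcut

theorem norm_cutoff_sub_le {ι : Type*} [Fintype ι] {δ : ℝ} (hδ : 0 ≤ δ) (v : ι → ℝ)
    {w : ι → ℝ} (hw : 0 ≤ w) : ‖cutoff δ v - w‖ ≤ ‖v - w‖ + δ := by
  refine (pi_norm_le_iff_of_nonneg (by positivity)).2 fun i => ?_
  calc ‖(cutoff δ v - w) i‖ = |max (v i) δ - w i| := rfl
    _ ≤ |v i - w i| + δ := abs_max_sub_le_abs_sub_add hδ (hw i)
    _ ≤ ‖v - w‖ + δ := by gcongr; exact norm_le_pi_norm (v - w) i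

theorem sub_eq_of_mulVec_eq_add {n R : Type*} [Fintype n] [DecidableEq n] [CommRing R]
    {B₀ B₁ : Matrix n n R} (hB₁ : IsUnit B₁) {F U' V u u' : n → R}
    (hU' : B₁ *ᵥ U' = B₀ *ᵥ V + F) :
    U' - u' = (B₁⁻¹ * B₀) *ᵥ (V - u) - B₁⁻¹ *ᵥ localTruncationError B₀ B₁ F u u' := by
  have hB₁' : IsUnit B₁.det := (isUnit_iff_isUnit_det B₁).1 hB₁
  have hsub : B₁ *ᵥ (U' - u') = B₀ *ᵥ (V - u) - localTruncationError B₀ B₁ F u u' := by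
    simp only [localTruncationError, mulVec_sub, hU']
    abel
  rw [← mulVec_mulVec, ← mulVec_sub, ← hsub, mulVec_mulVec, nonsing_inv_mul _ hB₁', one_mulVec]

theorem norm_sub_le_of_mulVec_eq_add_s10 {n 𝕜 : Type*} [Fintype n] [DecidableEq n]
    [NormedField 𝕜] {B₀ B₁ : Matrix n n 𝕜} (hB₁ : IsUnit B₁) {F U' V u u' : n → 𝕜}
    (hU' : B₁ *ᵥ U' = B₀ *ᵥ V + F) :
    ‖U' - u'‖ ≤ ‖B₁⁻¹ * B₀‖ * ‖V - u‖ + ‖B₁⁻¹‖ * ‖localTruncationError B₀ B₁ F u u'‖ := by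
  rw [sub_eq_of_mulVec_eq_add hB₁ hU']
  exact (norm_sub_le _ _).trans (add_le_add (linfty_opNorm_mulVec _ _) (linfty_opNorm_mulVec _ _))

theorem norm_cutoff_sub_le_of_mulVec_eq_add {n : Type*} [Fintype n] [DecidableEq n]
    {B₀ B₁ : Matrix n n ℝ} (hB₁ : IsUnit B₁) {δ : ℝ} (hδ : 0 ≤ δ) {F U' V u u' : n → ℝ}
    (hu' : 0 ≤ u') (hU' : B₁ *ᵥ U' = B₀ *ᵥ cutoff δ V + F) :
    ‖cutoff δ U' - u'‖ ≤ ‖B₁⁻¹ * B₀‖ * ‖cutoff δ V - u‖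
      + ‖B₁⁻¹‖ * ‖localTruncationError B₀ B₁ F u u'‖ + δ := by
  grw [norm_cutoff_sub_le hδ U' hu', norm_sub_le_of_mulVec_eq_add_s10 hB₁ hU']

theorem one_add_mul_gronwallBound_add_le {δ K ε : ℝ} (hδ : 0 ≤ δ) (hK : 0 ≤ K) (hε : 0 ≤ ε)
    (x : ℝ) : (1 + K) * gronwallBound δ K ε x + ε ≤ gronwallBound δ K ε (x + 1) := by
  rcases hK.eq_or_lt with rfl | hK
  · simp only [gronwallBound_K0]
    linarith
  have hc : 0 ≤ δ + ε / K := by positivity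
  simp only [gronwallBound_of_K_ne_0 hK.ne']
  calc (1 + K) * (δ * Real.exp (K * x) + ε / K * (Real.exp (K * x) - 1)) + ε
      = (δ + ε / K) * (1 + K) * Real.exp (K * x) - ε / K := by field_simp; ring
    _ ≤ (δ + ε / K) * Real.exp K * Real.exp (K * x) - ε / K := by
      gcongr
      linarith [Real.add_one_le_exp K]
    _ = δ * Real.exp (K * (x + 1)) + ε / K * (Real.exp (K * (x + 1)) - 1) := by
      rw [mul_add, mul_one, Real.exp_add]; ring

theorem le_gronwallBound_of_le_one_add_mul_add {E : ℕ → ℝ} {δ K ε : ℝ} (hδ : 0 ≤ δ) (hK : 0 ≤ K)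
    (hε : 0 ≤ ε) (h0 : E 0 ≤ δ) (hstep : ∀ n, E (n + 1) ≤ (1 + K) * E n + ε) (n : ℕ) :
    E n ≤ gronwallBound δ K ε n := by
  induction n with
  | zero => simpa only [Nat.cast_zero, gronwallBound_x0] using h0
  | succ n ih =>
    calc E (n + 1) ≤ (1 + K) * E n + ε := hstep n
      _ ≤ (1 + K) * gronwallBound δ K ε n + ε := by gcongr
      _ ≤ gronwallBound δ K ε (n + 1 : ℕ) := by
        exact_mod_cast one_add_mul_gronwallBound_add_le hδ hK hε n

theorem delta_cutoff_method_convergence_general (m : ℕ)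
    (B₀ B₁ : Matrix (Fin m) (Fin m) ℝ) (hB₁ : IsUnit B₁)
    (δ : ℝ) (hδ : 0 ≤ δ)
    (K K₁ Δt C X : ℝ) (hK : 0 < K) (hΔt : 0 < Δt)
    (hinv : ‖B₁⁻¹‖ ≤ K₁) (hstab : ‖B₁⁻¹ * B₀‖ ≤ 1 + K * Δt)
    (u : ℕ → Fin m → ℝ) (hu : ∀ n i, 0 ≤ u n i)
    (F : ℕ → Fin m → ℝ)
    (hτ : ∀ n, ‖B₁.mulVec (u (n + 1)) - B₀.mulVec (u n) - F n‖ ≤ C * Δt * X)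
    (U : ℕ → Fin m → ℝ) (hU0 : U 0 = u 0)
    (hstep : ∀ n, B₁.mulVec (U (n + 1)) = B₀.mulVec (fun i => max (U n i) δ) + F n) :
    ∀ n : ℕ, ‖(fun i => max (U n i) δ) - u n‖ ≤
      (K₁ / K) * Real.exp (K * n * Δt) * C * X
      + (((1 + K * Δt) / (K * Δt)) * Real.exp (K * n * Δt) + 1) * δ := by
  set ε := K₁ * (C * Δt * X) + δ
  have hKΔt : 0 < K * Δt := mul_pos hK hΔt
  have hK₁ : 0 ≤ K₁ := (norm_nonneg _).trans hinv
  have hCX : 0 ≤ C * Δt * X := (norm_nonneg _).trans (hτ 0)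
  have hε : 0 ≤ ε := by positivity
  have hτ' (n : ℕ) : ‖localTruncationError B₀ B₁ (F n) (u n) (u (n + 1))‖ ≤ C * Δt * X := hτ n
  have h0 : ‖cutoff δ (U 0) - u 0‖ ≤ δ := by
    simpa only [hU0, sub_self, norm_zero, zero_add] using norm_cutoff_sub_le hδ (u 0) (hu 0)
  have herr (n : ℕ) : ‖cutoff δ (U (n + 1)) - u (n + 1)‖
      ≤ (1 + K * Δt) * ‖cutoff δ (U n) - u n‖ + ε := by
    grw [norm_cutoff_sub_le_of_mulVec_eq_add (u := u n) hB₁ hδ (hu (n + 1)) (hstep n), hstab,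
      hinv, hτ' n, add_assoc]
  intro n
  calc ‖cutoff δ (U n) - u n‖ ≤ gronwallBound δ (K * Δt) ε n :=
        le_gronwallBound_of_le_one_add_mul_add (E := fun n => ‖cutoff δ (U n) - u n‖)
          hδ hKΔt.le hε h0 herr n
    _ = (K₁ / K) * Real.exp (K * n * Δt) * C * X
          + (((1 + K * Δt) / (K * Δt)) * Real.exp (K * n * Δt) + 1) * δ - (ε / (K * Δt) + δ) := by
        rw [gronwallBound_of_K_ne_0 hKΔt.ne', mul_right_comm K]
        field_simp
        ring
    _ ≤ _ := sub_le_self _ (by positivity)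

/-- Theorem 2.2 (convergence of the δ-cutoff finite difference method):
with `‖B₁⁻¹‖ ≤ K₁`, `‖B₁⁻¹ B₀‖ ≤ 1 + K Δt`, exact solution values `u n` componentwise
nonnegative with local truncation errors `τ n = B₁ u^{n+1} - B₀ u^n - F^n` satisfying
`‖τ n‖∞ ≤ C Δt X`, and the δ-cutoff scheme `U⁰ = u⁰`, `B₁ U^{n+1} = B₀ (U^n)_δ⁺ + F^n`,
we have `‖(U^n)_δ⁺ - u^n‖∞ ≤ (K₁/K) exp(K n Δt) C X
+ (((1 + K Δt)/(K Δt)) exp(K n Δt) + 1) δ` for all `n`. -/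
theorem delta_cutoff_method_convergence (m : ℕ) (hm : 0 < m)
    (B₀ B₁ : Matrix (Fin m) (Fin m) ℝ) (hB₁ : IsUnit B₁)
    (δ : ℝ) (hδ : 0 ≤ δ)
    (K K₁ Δt C X : ℝ) (hK : 0 < K) (hK₁ : 0 < K₁) (hΔt : 0 < Δt)
    (hC : 0 ≤ C) (hX : 0 ≤ X)
    (hinv : ‖B₁⁻¹‖ ≤ K₁) (hstab : ‖B₁⁻¹ * B₀‖ ≤ 1 + K * Δt)
    (u : ℕ → Fin m → ℝ) (hu : ∀ n i, 0 ≤ u n i)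
    (F : ℕ → Fin m → ℝ)
    (hτ : ∀ n, ‖B₁.mulVec (u (n + 1)) - B₀.mulVec (u n) - F n‖ ≤ C * Δt * X)
    (U : ℕ → Fin m → ℝ) (hU0 : U 0 = u 0)
    (hstep : ∀ n, B₁.mulVec (U (n + 1)) = B₀.mulVec (fun i => max (U n i) δ) + F n) :
    ∀ n : ℕ, ‖(fun i => max (U n i) δ) - u n‖ ≤
      (K₁ / K) * Real.exp (K * n * Δt) * C * X
      + (((1 + K * Δt) / (K * Δt)) * Real.exp (K * n * Δt) + 1) * δ :=
  delta_cutoff_method_convergence_general m B₀ B₁ hB₁ δ hδ K K₁ Δt C X hK hΔt hinv hstab u hu F hτ U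
    hU0 hstep
end
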